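/- arXiv:1406.4466 — 2 statements merged into one kernel-verified Lean document; each statement's English description precedes it below -/
import Mathlib

section
/- Let v_1,...,v_m ∈ ℝ^n and let a_1 ≤ b_1, ..., a_m ≤ b_m be real numbers. A vector w ∈ ℝ^n can be written as w = Σ_{i=1}^m x_i v_i for some real numbers x_i with a_i ≤ x_i ≤ b_i for each i, if and only if w ∈ Σ_{i=1}^m ℝ v_i and for every {v_1,...,v_m}-indecomposable point [u] ∈ ℝP_+^{n-1} one has (u,w) ≤ Σ_{i=1}^m a_i·((u,v_i) − |(u,v_i)|)/2 + Σ_{i=1}^m b_i·((u,v_i) + |(u,v_i)|)/2. -/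
noncomputable section

/-- The standard inner product on `ℝ^n`. -/
def dotR {n : ℕ} (u v : Fin n → ℝ) : ℝ := ∑ i, u i * v i

/-- `[u] = [u']` : positive equivalence of nonzero vectors (`u' = r • u` with `r > 0`). -/
def PosEq {n : ℕ} (u u' : Fin n → ℝ) : Prop := ∃ r : ℝ, 0 < r ∧ u' = r • u

/-- `u` is `{v₁,…,vₘ}`-decomposable. -/
def Decomp {n m : ℕ} (v : Fin m → Fin n → ℝ) (u : Fin n → ℝ) : Prop :=
  ∃ u' u'' : Fin n → ℝ, u' ≠ 0 ∧ u'' ≠ 0 ∧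
    u' ∈ Submodule.span ℝ (Set.range v) ∧ u'' ∈ Submodule.span ℝ (Set.range v) ∧
    u = u' + u'' ∧ ¬ PosEq u u' ∧ ¬ PosEq u u'' ∧
    ∀ i, 0 ≤ dotR u' (v i) * dotR u'' (v i)

/-- `u` is `{v₁,…,vₘ}`-indecomposable. -/
def Indecomp {n m : ℕ} (v : Fin m → Fin n → ℝ) (u : Fin n → ℝ) : Prop :=
  u ≠ 0 ∧ u ∈ Submodule.span ℝ (Set.range v) ∧ ¬ Decomp v u

/-!
Necessity is termwise: `xᵢ (u, vᵢ)` is at most `aᵢ` times the negative part plus `bᵢ` times the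
positive part of `(u, vᵢ)`, and the right-hand side is the support function `h(u)` of the
zonotope `{∑ xᵢ vᵢ | x ∈ [a, b]}`. For sufficiency, if `w ∈ span {vᵢ}` is not in the zonotope,
a separating hyperplane, represented inside `span {vᵢ}`, gives `u` in the span with `h(u) < (u, w)`.
It remains to extend `(u, w) ≤ h(u)` from indecomposable `u` to the whole span. On the cone of
`u ∈ span {vᵢ}` with prescribed signs of the `(u, vᵢ)`, `h` is linear; the cone is pointed, hence
has a compact convex base, and the extreme points of that base are indecomposable, because the
summands of a sign-compatible decomposition stay in the cone. By Krein–Milman the linear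
inequality passes from the extreme points to the base, hence to the cone.
-/

open Matrix

section DotR

variable {n m : ℕ}

lemma dotR_eq_dotProduct (u x : Fin n → ℝ) : dotR u x = u ⬝ᵥ x := rfl

lemma dotR_add_left (u u' x : Fin n → ℝ) : dotR (u + u') x = dotR u x + dotR u' x :=
  add_dotProduct u u' x

lemma dotR_smul_left (c : ℝ) (u x : Fin n → ℝ) : dotR (c • u) x = c * dotR u x :=
  smul_dotProduct c u x

lemma dotR_sum_smul_right (u : Fin n → ℝ) (x : Fin m → ℝ) (v : Fin m → Fin n → ℝ) :
    dotR u (∑ i, x i • v i) = ∑ i, x i * dotR u (v i) := by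
  simp only [dotR_eq_dotProduct, dotProduct_sum, dotProduct_smul, smul_eq_mul]

lemma dotR_sub_right (u x y : Fin n → ℝ) : dotR u (x - y) = dotR u x - dotR u y :=
  dotProduct_sub u x y

lemma continuous_dotR_left (x : Fin n → ℝ) : Continuous fun u : Fin n → ℝ => dotR u x :=
  continuous_id.dotProduct continuous_const

lemma eq_zero_of_mem_span_of_dotR_eq_zero {v : Fin m → Fin n → ℝ} {u : Fin n → ℝ}
    (hu : u ∈ Submodule.span ℝ (Set.range v)) (h : ∀ i, dotR u (v i) = 0) : u = 0 := by
  have hspan : Submodule.span ℝ (Set.range v) ≤ LinearMap.ker (dotProductBilin ℝ ℝ u) :=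
    Submodule.span_le.mpr (Set.range_subset_iff.mpr h)
  exact dotProduct_self_eq_zero.mp (hspan hu)

lemma exists_norm_le_of_mem_span (v : Fin m → Fin n → ℝ) : ∃ K : ℝ, 0 ≤ K ∧
    ∀ u ∈ Submodule.span ℝ (Set.range v), ‖u‖ ≤ K * ‖fun i => dotR u (v i)‖ := by
  set V := Submodule.span ℝ (Set.range v)
  set T : V →ₗ[ℝ] (Fin m → ℝ) := (Matrix.of v).mulVecLin.domRestrict V
  have hT : ∀ u : V, T u = fun i => dotR u (v i) := fun u => by
    ext i; exact dotProduct_comm (v i) (u : Fin n → ℝ)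
  obtain ⟨K, -, hK⟩ := T.exists_antilipschitzWith <| LinearMap.ker_eq_bot'.mpr fun u hu =>
    Subtype.ext <| eq_zero_of_mem_span_of_dotR_eq_zero u.2 fun i => by
      simpa [hT] using congrFun hu i
  refine ⟨K, K.2, fun u hu => ?_⟩
  have hle := hK.le_mul_dist ⟨u, hu⟩ 0
  rwa [map_zero, dist_zero_right, dist_zero_right, hT] at hle

end DotR

section ZonotopeSupport

variable {n m : ℕ} (v : Fin m → Fin n → ℝ) (a b : Fin m → ℝ)

/-- The support function `u ↦ max {(u, ∑ xᵢ vᵢ) | aᵢ ≤ xᵢ ≤ bᵢ}` of the zonotope. -/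
def zonotopeSupport (u : Fin n → ℝ) : ℝ :=
  ∑ i, a i * ((dotR u (v i) - |dotR u (v i)|) / 2) +
    ∑ i, b i * ((dotR u (v i) + |dotR u (v i)|) / 2)

lemma zonotopeSupport_eq_sum (u : Fin n → ℝ) :
    zonotopeSupport v a b u = ∑ i, (a i * ((dotR u (v i) - |dotR u (v i)|) / 2) +
      b i * ((dotR u (v i) + |dotR u (v i)|) / 2)) :=
  (Finset.sum_add_distrib).symm

lemma dotR_sum_smul_le_zonotopeSupport {x : Fin m → ℝ} (hx : ∀ i, a i ≤ x i ∧ x i ≤ b i)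
    (u : Fin n → ℝ) : dotR u (∑ i, x i • v i) ≤ zonotopeSupport v a b u := by
  rw [dotR_sum_smul_right, zonotopeSupport_eq_sum]
  refine Finset.sum_le_sum fun i _ => ?_
  rcases le_total 0 (dotR u (v i)) with h | h
  · rw [abs_of_nonneg h]; nlinarith [hx i]
  · rw [abs_of_nonpos h]; nlinarith [hx i]

def boxVertex (s : Fin m → ℝ) (i : Fin m) : ℝ := if 0 < s i then b i else a i

lemma boxVertex_mem_Icc (hab : ∀ i, a i ≤ b i) (s : Fin m → ℝ) (i : Fin m) :
    a i ≤ boxVertex a b s i ∧ boxVertex a b s i ≤ b i := by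
  unfold boxVertex
  split_ifs
  · exact ⟨hab i, le_rfl⟩
  · exact ⟨le_rfl, hab i⟩

lemma zonotopeSupport_eq_dotR_boxVertex {s : Fin m → ℝ} (hs : ∀ i, s i ≠ 0) {u : Fin n → ℝ}
    (hu : ∀ i, 0 ≤ s i * dotR u (v i)) :
    zonotopeSupport v a b u = dotR u (∑ i, boxVertex a b s i • v i) := by
  rw [dotR_sum_smul_right, zonotopeSupport_eq_sum]
  refine Finset.sum_congr rfl fun i _ => ?_
  unfold boxVertex
  split_ifs with hsi
  · rw [abs_of_nonneg (nonneg_of_mul_nonneg_right (hu i) hsi)]; ring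
  · have hsi' : s i < 0 := (not_lt.mp hsi).lt_of_ne (hs i)
    rw [abs_of_nonpos (nonpos_of_mul_nonneg_right (hu i) hsi')]; ring

end ZonotopeSupport

section SignCone

variable {n m : ℕ} (v : Fin m → Fin n → ℝ) (s : Fin m → ℝ)

def signCone : Set (Fin n → ℝ) :=
  {u | u ∈ Submodule.span ℝ (Set.range v) ∧ ∀ i, 0 ≤ s i * dotR u (v i)}

def signSum (u : Fin n → ℝ) : ℝ := ∑ i, s i * dotR u (v i)

def signBase : Set (Fin n → ℝ) := {u | u ∈ signCone v s ∧ signSum v s u = 1}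

variable {v s}

lemma signSum_add (u u' : Fin n → ℝ) : signSum v s (u + u') = signSum v s u + signSum v s u' := by
  simp only [signSum, dotR_add_left, mul_add, Finset.sum_add_distrib]

lemma signSum_smul (c : ℝ) (u : Fin n → ℝ) : signSum v s (c • u) = c * signSum v s u := by
  simp only [signSum, dotR_smul_left, Finset.mul_sum]
  exact Finset.sum_congr rfl fun i _ => by ring

lemma continuous_signSum : Continuous (signSum v s) :=
  continuous_finsetSum _ fun i _ => continuous_const.mul (continuous_dotR_left (v i))

lemma signSum_pos (hs : ∀ i, s i ≠ 0) {u : Fin n → ℝ} (hu : u ∈ signCone v s) (hne : u ≠ 0) :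
    0 < signSum v s u := by
  refine (Finset.sum_nonneg fun i _ => hu.2 i).lt_of_ne fun hzero => hne ?_
  refine eq_zero_of_mem_span_of_dotR_eq_zero hu.1 fun i => ?_
  have hi := (Finset.sum_eq_zero_iff_of_nonneg fun j _ => hu.2 j).mp hzero.symm i
    (Finset.mem_univ i)
  exact (mul_eq_zero.mp hi).resolve_left (hs i)

lemma inv_signSum_smul_mem_signBase (hs : ∀ i, s i ≠ 0) {u : Fin n → ℝ} (hu : u ∈ signCone v s)
    (hne : u ≠ 0) : (signSum v s u)⁻¹ • u ∈ signBase v s := by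
  have hpos := signSum_pos hs hu hne
  refine ⟨⟨Submodule.smul_mem _ _ hu.1, fun i => ?_⟩, ?_⟩
  · rw [dotR_smul_left, mul_left_comm]
    exact mul_nonneg (inv_nonneg.mpr hpos.le) (hu.2 i)
  · rw [signSum_smul, inv_mul_cancel₀ hpos.ne']

lemma convex_signBase : Convex ℝ (signBase v s) := by
  intro x hx y hy c d hc hd hcd
  refine ⟨⟨(Submodule.span ℝ (Set.range v)).convex hx.1.1 hy.1.1 hc hd hcd, fun i => ?_⟩, ?_⟩
  · rw [dotR_add_left, dotR_smul_left, dotR_smul_left]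
    nlinarith [mul_nonneg hc (hx.1.2 i), mul_nonneg hd (hy.1.2 i)]
  · rw [signSum_add, signSum_smul, signSum_smul, hx.2, hy.2, mul_one, mul_one, hcd]

lemma isClosed_signBase : IsClosed (signBase v s) := by
  have hbase : signBase v s = ((Submodule.span ℝ (Set.range v) : Set (Fin n → ℝ)) ∩
      ⋂ i, {u | 0 ≤ s i * dotR u (v i)}) ∩ signSum v s ⁻¹' {1} := by
    ext u; simp [signBase, signCone]
  rw [hbase]
  refine (Submodule.closed_of_finiteDimensional _).inter (isClosed_iInter fun i => ?_)
    |>.inter (isClosed_singleton.preimage continuous_signSum)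
  exact isClosed_le continuous_const (continuous_const.mul (continuous_dotR_left (v i)))

lemma abs_dotR_le_of_mem_signBase (hs : ∀ i, s i ≠ 0) {u : Fin n → ℝ} (hu : u ∈ signBase v s)
    (i : Fin m) : |dotR u (v i)| ≤ |s i|⁻¹ := by
  rw [← mul_one |s i|⁻¹, le_inv_mul_iff₀ (abs_pos.mpr (hs i)), ← abs_mul,
    abs_of_nonneg (hu.1.2 i), ← hu.2]
  exact Finset.single_le_sum (fun j _ => hu.1.2 j) (Finset.mem_univ i)

lemma isBounded_signBase (hs : ∀ i, s i ≠ 0) : Bornology.IsBounded (signBase v s) := by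
  obtain ⟨K, hK0, hK⟩ := exists_norm_le_of_mem_span v
  have hsum : 0 ≤ ∑ i, |s i|⁻¹ := Finset.sum_nonneg fun i _ => inv_nonneg.mpr (abs_nonneg _)
  rw [isBounded_iff_forall_norm_le]
  refine ⟨K * ∑ i, |s i|⁻¹, fun u hu => (hK u hu.1.1).trans ?_⟩
  refine mul_le_mul_of_nonneg_left ((pi_norm_le_iff_of_nonneg hsum).mpr fun i => ?_) hK0
  rw [Real.norm_eq_abs]
  exact (abs_dotR_le_of_mem_signBase hs hu i).trans
    (Finset.single_le_sum (fun j _ => inv_nonneg.mpr (abs_nonneg (s j))) (Finset.mem_univ i))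

lemma isCompact_signBase (hs : ∀ i, s i ≠ 0) : IsCompact (signBase v s) :=
  Metric.isCompact_of_isClosed_isBounded isClosed_signBase (isBounded_signBase hs)

end SignCone

section Reduction

variable {n m : ℕ} {v : Fin m → Fin n → ℝ} {s : Fin m → ℝ}

lemma indecomp_of_mem_extremePoints_signBase (hs : ∀ i, s i ≠ 0) {e : Fin n → ℝ}
    (he : e ∈ (signBase v s).extremePoints ℝ) : Indecomp v e := by
  obtain ⟨heB, hext⟩ := mem_extremePoints.mp he
  refine ⟨fun h0 => ?_, heB.1.1, ?_⟩
  · have hsum := heB.2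
    rw [h0, ← zero_smul ℝ (0 : Fin n → ℝ), signSum_smul, zero_mul] at hsum
    exact zero_ne_one hsum
  rintro ⟨u', u'', hu'0, hu''0, hu', hu'', rfl, hnot', -, hsign⟩
  have hcone : ∀ i, 0 ≤ s i * dotR u' (v i) ∧ 0 ≤ s i * dotR u'' (v i) := fun i => by
    have hprod : 0 ≤ (s i * dotR u' (v i)) * (s i * dotR u'' (v i)) := by
      nlinarith [mul_nonneg (mul_self_nonneg (s i)) (hsign i)]
    have hadd := heB.1.2 i
    rw [dotR_add_left, mul_add] at hadd
    constructor <;> nlinarith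
  have hu'C : u' ∈ signCone v s := ⟨hu', fun i => (hcone i).1⟩
  have hu''C : u'' ∈ signCone v s := ⟨hu'', fun i => (hcone i).2⟩
  have ht' := signSum_pos hs hu'C hu'0
  have ht'' := signSum_pos hs hu''C hu''0
  -- by extremality, the normalisation of `u'` is `u' + u''` itself
  have hseg : u' + u'' ∈ openSegment ℝ ((signSum v s u')⁻¹ • u') ((signSum v s u'')⁻¹ • u'') :=
    ⟨_, _, ht', ht'', (signSum_add u' u'').symm.trans heB.2, by
      rw [smul_smul, smul_smul, mul_inv_cancel₀ ht'.ne', mul_inv_cancel₀ ht''.ne', one_smul,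
        one_smul]⟩
  obtain ⟨heq, -⟩ := hext _ (inv_signSum_smul_mem_signBase hs hu'C hu'0) _
    (inv_signSum_smul_mem_signBase hs hu''C hu''0) hseg
  exact hnot' ⟨_, ht', by rw [← heq, smul_smul, mul_inv_cancel₀ ht'.ne', one_smul]⟩

lemma dotR_nonneg_of_mem_signCone (hs : ∀ i, s i ≠ 0) {q : Fin n → ℝ}
    (hq : ∀ e ∈ (signBase v s).extremePoints ℝ, 0 ≤ dotR e q) {u : Fin n → ℝ}
    (hu : u ∈ signCone v s) : 0 ≤ dotR u q := by
  rcases eq_or_ne u 0 with rfl | hne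
  · exact (zero_dotProduct q).ge
  have hconvex : Convex ℝ {x : Fin n → ℝ | 0 ≤ dotR x q} :=
    convex_halfSpace_ge ⟨fun x y => dotR_add_left x y q, fun c x => dotR_smul_left c x q⟩ 0
  have hclosed : IsClosed {x : Fin n → ℝ | 0 ≤ dotR x q} :=
    isClosed_le continuous_const (continuous_dotR_left q)
  have hbase : signBase v s ⊆ {x | 0 ≤ dotR x q} := by
    rw [← closure_convexHull_extremePoints (isCompact_signBase hs) convex_signBase]
    exact closure_minimal (convexHull_min hq hconvex) hclosed
  have hnorm : 0 ≤ dotR ((signSum v s u)⁻¹ • u) q :=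
    hbase (inv_signSum_smul_mem_signBase hs hu hne)
  rw [dotR_smul_left] at hnorm
  exact nonneg_of_mul_nonneg_right hnorm (inv_pos.mpr (signSum_pos hs hu hne))

def signPattern (v : Fin m → Fin n → ℝ) (u : Fin n → ℝ) (i : Fin m) : ℝ :=
  if 0 ≤ dotR u (v i) then 1 else -1

lemma signPattern_ne_zero (u : Fin n → ℝ) (i : Fin m) : signPattern v u i ≠ 0 := by
  unfold signPattern; split_ifs <;> norm_num

lemma signPattern_mul_dotR_nonneg (u : Fin n → ℝ) (i : Fin m) :
    0 ≤ signPattern v u i * dotR u (v i) := by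
  unfold signPattern; split_ifs <;> linarith

lemma dotR_le_zonotopeSupport_of_mem_span (a b : Fin m → ℝ) {w : Fin n → ℝ}
    (hind : ∀ u, Indecomp v u → dotR u w ≤ zonotopeSupport v a b u) {u : Fin n → ℝ}
    (hu : u ∈ Submodule.span ℝ (Set.range v)) : dotR u w ≤ zonotopeSupport v a b u := by
  set s := signPattern v u
  have hs : ∀ i, s i ≠ 0 := signPattern_ne_zero u
  set q := ∑ i, boxVertex a b s i • v i - w
  have hlin : ∀ x ∈ signCone v s, zonotopeSupport v a b x - dotR x w = dotR x q := fun x hx => by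
    rw [zonotopeSupport_eq_dotR_boxVertex v a b hs hx.2, dotR_sub_right]
  have hq : ∀ e ∈ (signBase v s).extremePoints ℝ, 0 ≤ dotR e q := fun e he => by
    rw [← hlin e he.1.1, sub_nonneg]
    exact hind e (indecomp_of_mem_extremePoints_signBase hs he)
  have hus : u ∈ signCone v s := ⟨hu, signPattern_mul_dotR_nonneg u⟩
  linarith [hlin u hus, dotR_nonneg_of_mem_signCone hs hq hus]

end Reduction

section Separation

variable {n : ℕ}

lemma exists_mem_forall_dotR_eq (V : Submodule ℝ (Fin n → ℝ)) (f : (Fin n → ℝ) →ₗ[ℝ] ℝ) :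
    ∃ z ∈ V, ∀ y ∈ V, dotR z y = f y := by
  set B : LinearMap.BilinForm ℝ V := (dotProductBilin ℝ ℝ).compl₁₂ V.subtype V.subtype
  have hB : B.Nondegenerate :=
    ⟨fun u hu => Subtype.ext (dotProduct_self_eq_zero.mp (hu u)),
      fun u hu => Subtype.ext (dotProduct_self_eq_zero.mp (hu u))⟩
  exact ⟨_, Submodule.coe_mem ((B.toDual hB).symm (f.domRestrict V)), fun y hy =>
    LinearMap.BilinForm.apply_toDual_symm_apply (hB := hB) (f.domRestrict V) ⟨y, hy⟩⟩

lemma exists_mem_forall_dotR_lt_of_notMem {V : Submodule ℝ (Fin n → ℝ)} {K : Set (Fin n → ℝ)}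
    (hKV : K ⊆ V) (hconv : Convex ℝ K) (hclosed : IsClosed K) {w : Fin n → ℝ} (hw : w ∈ V)
    (hwK : w ∉ K) : ∃ z ∈ V, ∀ y ∈ K, dotR z y < dotR z w := by
  obtain ⟨f, c, hfK, hfw⟩ := geometric_hahn_banach_closed_point hconv hclosed hwK
  obtain ⟨z, hzV, hz⟩ := exists_mem_forall_dotR_eq V f.toLinearMap
  refine ⟨z, hzV, fun y hy => ?_⟩
  rw [hz y (hKV hy), hz w hw]
  exact (hfK y hy).trans hfw

end Separation

/-- The condition on a point `[u]` is scale invariant, so it is expressed by quantifying over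
all indecomposable representatives `u`. -/
theorem farkas_real_indecomposable {n m : ℕ} (v : Fin m → Fin n → ℝ) (a b : Fin m → ℝ)
    (hab : ∀ i, a i ≤ b i) (w : Fin n → ℝ) :
    (∃ x : Fin m → ℝ, (∀ i, a i ≤ x i ∧ x i ≤ b i) ∧ w = ∑ i, x i • v i) ↔
      (w ∈ Submodule.span ℝ (Set.range v) ∧
        ∀ u : Fin n → ℝ, Indecomp v u →
          dotR u w ≤ ∑ i, a i * ((dotR u (v i) - |dotR u (v i)|) / 2) +
            ∑ i, b i * ((dotR u (v i) + |dotR u (v i)|) / 2)) := by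
  set V := Submodule.span ℝ (Set.range v)
  set L : (Fin m → ℝ) →ₗ[ℝ] (Fin n → ℝ) := Fintype.linearCombination ℝ v
  have hL : ∀ x, L x = ∑ i, x i • v i := fun x => Fintype.linearCombination_apply ℝ v x
  have hLV : ∀ x, L x ∈ V := fun x =>
    (Fintype.range_linearCombination ℝ v).le (LinearMap.mem_range_self L x)
  constructor
  · rintro ⟨x, hx, rfl⟩
    exact ⟨hL x ▸ hLV x, fun u _ => dotR_sum_smul_le_zonotopeSupport v a b hx u⟩
  rintro ⟨hw, hind⟩
  by_contra hnot
  set K := L '' Set.Icc a b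
  have hKV : K ⊆ V := Set.image_subset_iff.mpr fun x _ => hLV x
  have hwK : w ∉ K := fun ⟨x, hx, hxw⟩ => hnot ⟨x, fun i => ⟨hx.1 i, hx.2 i⟩, by rw [← hxw, hL]⟩
  obtain ⟨z, hzV, hz⟩ := exists_mem_forall_dotR_lt_of_notMem hKV ((convex_Icc a b).linear_image L)
    (isCompact_Icc.image L.continuous_of_finiteDimensional).isClosed hw hwK
  set x := boxVertex a b (signPattern v z)
  have hx : dotR z (L x) = zonotopeSupport v a b z := by
    rw [hL, zonotopeSupport_eq_dotR_boxVertex v a b (signPattern_ne_zero z)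
      (signPattern_mul_dotR_nonneg z)]
  have hxK : L x ∈ K := ⟨x, ⟨fun i => (boxVertex_mem_Icc a b hab _ i).1,
    fun i => (boxVertex_mem_Icc a b hab _ i).2⟩, rfl⟩
  exact (hz _ hxK).not_ge (hx ▸ dotR_le_zonotopeSupport_of_mem_span a b hind hzV)
end
end

section
/- Let v_1,...,v_m ∈ ℤ^n. The vectors v_1,...,v_m are Farkas-related if and only if for every elementary integral relation Σ_{i=1}^m a_i v_i = 0 one has a_1,...,a_m ∈ {−1,0,1}. -/
noncomputable section

/-- The embedding `ℤ^n ⊆ ℚ^n`. -/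
def ZtoQ {n : ℕ} (x : Fin n → ℤ) : Fin n → ℚ := fun i => (x i : ℚ)

/-- The vectors `v₁,…,vₘ ∈ ℤ^n` are Farkas-related. -/
def FarkasRelated {n m : ℕ} (v : Fin m → Fin n → ℤ) : Prop :=
  ∀ a b : Fin m → ℤ, (∀ i, a i ≤ b i) →
    ∀ w : Fin n → ℤ, w ∈ Submodule.span ℤ (Set.range v) →
      (∃ x : Fin m → ℚ, (∀ i, (a i : ℚ) ≤ x i ∧ x i ≤ (b i : ℚ)) ∧
        ZtoQ w = ∑ i, x i • ZtoQ (v i)) →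
      ∃ y : Fin m → ℤ, (∀ i, a i ≤ y i ∧ y i ≤ b i) ∧ w = ∑ i, y i • v i

/-- `∑ aᵢ vᵢ = 0` is an elementary integral relation among `v₁,…,vₘ`: the vector
`a` is a nonzero element of the null space `{x ∈ ℚ^m : ∑ xᵢ vᵢ = 0}` whose support is
minimal among supports of nonzero elements of the null space, and whose coordinates are
relatively prime integers. -/
def IsElemIntRelation {n m : ℕ} (v : Fin m → Fin n → ℤ) (a : Fin m → ℚ) : Prop :=
  (∑ i, a i • ZtoQ (v i)) = 0 ∧ a ≠ 0 ∧
    (∀ y : Fin m → ℚ, (∑ i, y i • ZtoQ (v i)) = 0 → y ≠ 0 →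
      {i | y i ≠ 0} ⊆ {i | a i ≠ 0} → {i | y i ≠ 0} = {i | a i ≠ 0}) ∧
    ∃ c : Fin m → ℤ, (∀ i, (c i : ℚ) = a i) ∧ Finset.univ.gcd c = 1

/-!
If `a` is an elementary integral relation with `aᵢ ≠ 0`, the Farkas property applied to
`x = a / aᵢ` in the box `[⌊x⌋, ⌈x⌉]` gives an integral relation `y` with `yᵢ = 1` and support
inside that of `a`. An elementary vector is proportional to every relation supported inside its
support, so `y = x`; thus `aᵢ` divides all the coprime `aⱼ`, i.e. `aᵢ = ±1`.

Conversely, move a rational solution `x ∈ [a, b]` along the relations until no nonzero relation is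
supported on its slack coordinates (those strictly inside the box). For an integral solution `z`,
`x - z` is a relation that is integral off the slack coordinates. Every nonzero relation dominates
the support of a `{0, ±1}`-valued one (a primitive elementary relation), which must meet a
non-slack coordinate; subtracting an integral multiple of it shrinks the support of `x - z` while
keeping it integral off the slack coordinates. By induction `x - z`, hence `x`, is integral.
-/

open Function Set

section Elementary

variable {ι K : Type*} [Field K] {V : Submodule K (ι → K)} {e y : ι → K}

def IsElementary (V : Submodule K (ι → K)) (e : ι → K) : Prop :=
  e ∈ V ∧ e ≠ 0 ∧ ∀ y ∈ V, y ≠ 0 → support y ⊆ support e → support y = support e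

lemma IsElementary.smul (he : IsElementary V e) {r : K} (hr : r ≠ 0) :
    IsElementary V (r • e) := by
  obtain ⟨heV, he0, hmin⟩ := he
  rw [IsElementary, support_const_smul_of_ne_zero r e hr]
  exact ⟨V.smul_mem r heV, smul_ne_zero hr he0, hmin⟩

lemma exists_isElementary_support_subset [Finite ι] {d : ι → K} (hd : d ∈ V) (hd0 : d ≠ 0) :
    ∃ e, IsElementary V e ∧ support e ⊆ support d := by
  obtain ⟨_, hsd, ⟨e, heV, he0, rfl⟩, hmin⟩ := exists_minimal_le_of_wellFoundedLT
    (fun s => ∃ e ∈ V, e ≠ 0 ∧ support e = s) (support d) ⟨d, hd, hd0, rfl⟩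
  exact ⟨e, ⟨heV, he0, fun y hy hy0 hye => le_antisymm hye (hmin ⟨y, hy, hy0, rfl⟩ hye)⟩, hsd⟩

lemma IsElementary.eq_smul_of_support_subset (he : IsElementary V e) (hy : y ∈ V)
    (hye : support y ⊆ support e) {i : ι} (hi : e i ≠ 0) : y = (y i / e i) • e := by
  obtain ⟨heV, -, hmin⟩ := he
  by_contra hne
  set u := y - (y i / e i) • e
  have hu : support u = support e :=
    hmin u (V.sub_mem hy (V.smul_mem _ heV)) (sub_ne_zero.mpr hne)
      ((support_sub _ _).trans (union_subset hye (support_const_smul_subset _ _)))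
  have hui : u i = 0 := by simp [u, hi]
  exact (hu ▸ hi : i ∈ support u) hui

end Elementary

section Slack

variable {ι K : Type*} [Finite ι] [Field K] [LinearOrder K] [IsStrictOrderedRing K]
  {a b x g : ι → K}

def slackIndices (a b x : ι → K) : Set ι := {i | a i < x i ∧ x i < b i}

lemma exists_add_smul_mem_Icc_slackIndices_ssubset (hx : x ∈ Icc a b) (hg0 : g ≠ 0)
    (hg : support g ⊆ slackIndices a b x) :
    ∃ s : K, x + s • g ∈ Icc a b ∧ slackIndices a b (x + s • g) ⊂ slackIndices a b x := by
  -- moving along `g`, coordinate `i` reaches the bound `t i` at time `δ i`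
  set t : ι → K := fun i => if 0 < g i then b i else a i
  set δ : ι → K := fun i => (t i - x i) / g i
  have hδ : ∀ i ∈ support g, 0 < δ i ∧ x i + δ i * g i = t i := by
    intro i hi
    refine ⟨?_, by rw [div_mul_cancel₀ _ hi, add_sub_cancel]⟩
    obtain ⟨hai, hib⟩ := hg hi
    rcases (Ne.lt_or_gt hi : g i < 0 ∨ 0 < g i) with hneg | hpos
    · exact div_pos_of_neg_of_neg (by simp [t, hneg.not_gt, hai]) hneg
    · exact div_pos (by simp [t, hpos, hib]) hpos
  have ht : ∀ i, t i ∈ Icc (a i) (b i) := fun i => by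
    by_cases h : 0 < g i <;> simp [t, h, (hx.1 i).trans (hx.2 i)]
  obtain ⟨j, hj, hjmin⟩ :=
    (support g).exists_min_image δ (toFinite _) (support_nonempty_iff.mpr hg0)
  have hmove : ∀ i, x i + δ j * g i ∈ Icc (a i) (b i) := by
    intro i
    by_cases hi : g i = 0
    · simpa [hi] using And.intro (hx.1 i) (hx.2 i)
    obtain ⟨hδi, hti⟩ := hδ i hi
    have := (convex_Icc (a i) (b i)).add_smul_mem ⟨hx.1 i, hx.2 i⟩ (hti ▸ ht i)
      (t := δ j / δ i) ⟨div_nonneg (hδ j hj).1.le hδi.le, div_le_one_of_le₀ (hjmin i hi) hδi.le⟩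
    rwa [smul_eq_mul, ← mul_assoc, div_mul_cancel₀ _ hδi.ne'] at this
  refine ⟨δ j, ⟨fun i => (hmove i).1, fun i => (hmove i).2⟩, ?_⟩
  have hsub : slackIndices a b (x + δ j • g) ⊆ slackIndices a b x := fun i hi => by
    by_cases hgi : g i = 0
    · simpa [slackIndices, hgi] using hi
    · exact hg hgi
  refine (ssubset_iff_of_subset hsub).mpr ⟨j, hg hj, fun hj' => ?_⟩
  have hxj : (x + δ j • g) j = t j := (hδ j hj).2
  replace hj' : a j < t j ∧ t j < b j := hxj ▸ hj'
  by_cases h : 0 < g j <;> simp [t, h] at hj'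

lemma exists_mem_Icc_sub_mem_forall_support_subset_slackIndices (V : Submodule K (ι → K))
    (hx : x ∈ Icc a b) :
    ∃ y ∈ Icc a b, y - x ∈ V ∧ ∀ g ∈ V, support g ⊆ slackIndices a b y → g = 0 := by
  obtain ⟨y, ⟨hy, hyx⟩, hmin⟩ := exists_minimalFor_of_wellFoundedLT
    (fun y => y ∈ Icc a b ∧ y - x ∈ V) (fun y => (slackIndices a b y).ncard) ⟨x, hx, by simp⟩
  refine ⟨y, hy, hyx, fun g hg hgy => by_contra fun hg0 => ?_⟩
  obtain ⟨s, hs, hlt⟩ := exists_add_smul_mem_Icc_slackIndices_ssubset hy hg0 hgy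
  have hsx : y + s • g - x ∈ V := by
    simpa [add_sub_right_comm] using V.add_mem hyx (V.smul_mem s hg)
  exact (ncard_lt_ncard hlt).not_ge (hmin ⟨hs, hsx⟩ (ncard_lt_ncard hlt).le)

end Slack

section Integral

variable {ι : Type*}

lemma exists_smul_eq_intCast_gcd_eq_one [Fintype ι] {q : ι → ℚ} (hq : q ≠ 0) :
    ∃ r : ℚ, r ≠ 0 ∧ ∃ c : ι → ℤ, (∀ i, (c i : ℚ) = r * q i) ∧ Finset.univ.gcd c = 1 := by
  obtain ⟨⟨N, hN⟩, hNq⟩ := IsLocalization.exist_integer_multiples_of_finite (nonZeroDivisors ℤ) q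
  choose c₀ hc₀ using hNq
  obtain ⟨i₀, hi₀⟩ : ∃ i, q i ≠ 0 := Function.ne_iff.mp hq
  obtain ⟨c, hc, hgcd⟩ := Finset.univ.extract_gcd c₀ ⟨i₀, Finset.mem_univ _⟩
  have hN0 : (N : ℚ) ≠ 0 := by exact_mod_cast nonZeroDivisors.ne_zero hN
  set g := Finset.univ.gcd c₀
  have hgc : ∀ i, (g : ℚ) * c i = N * q i := fun i => by
    simpa [hc i (Finset.mem_univ _)] using hc₀ i
  have hg : (g : ℚ) ≠ 0 := fun h0 => by simpa [h0, hN0, hi₀] using hgc i₀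
  refine ⟨N / g, div_ne_zero hN0 hg, c, fun i => ?_, hgcd⟩
  rw [div_mul_eq_mul_div, ← hgc i, mul_div_cancel_left₀ _ hg]

lemma forall_mem_bot_of_forall_notMem [Finite ι] {V : Submodule ℚ (ι → ℚ)} {F : Set ι}
    (hsign : ∀ d ∈ V, d ≠ 0 → ∃ e ∈ V, e ≠ 0 ∧ support e ⊆ support d ∧
      ∀ i, e i = -1 ∨ e i = 0 ∨ e i = 1)
    (hF : ∀ g ∈ V, support g ⊆ F → g = 0) {d : ι → ℚ} (hd : d ∈ V)
    (hdF : ∀ i ∉ F, d i ∈ (⊥ : Subring ℚ)) (i : ι) : d i ∈ (⊥ : Subring ℚ) := by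
  induction hk : (support d).ncard using Nat.strong_induction_on generalizing d with
  | _ k ih =>
  by_cases hd0 : d = 0
  · simp [hd0]
  obtain ⟨e, heV, he0, hed, he⟩ := hsign d hd hd0
  obtain ⟨j, hje, hjF⟩ : ∃ j ∈ support e, j ∉ F := not_subset.mp (mt (hF e heV) he0)
  have heZ : ∀ i, e i ∈ (⊥ : Subring ℚ) := fun i => by
    rcases he i with h | h | h <;> simp [h]
  have hej : e j * e j = 1 := by
    rcases he j with h | h | h <;> simp_all
  -- subtracting an integral multiple of `e` kills the coordinate `j` of `d`
  set t := d j * e j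
  have ht : t ∈ (⊥ : Subring ℚ) := mul_mem (hdF j hjF) (heZ j)
  have hsub : support (d - t • e) ⊆ support d :=
    (support_sub _ _).trans (union_subset subset_rfl ((support_const_smul_subset _ _).trans hed))
  have hlt : (support (d - t • e)).ncard < k := hk ▸ ncard_lt_ncard
    ((ssubset_iff_of_subset hsub).mpr ⟨j, hed hje, by simp [t, mul_assoc, hej]⟩)
  have := ih _ hlt (V.sub_mem hd (V.smul_mem t heV))
    (fun i hi => sub_mem (hdF i hi) (mul_mem ht (heZ i))) rfl
  simpa using add_mem this (mul_mem ht (heZ i))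

end Integral

section Farkas

variable {n m : ℕ} {v : Fin m → Fin n → ℤ}

def relations (v : Fin m → Fin n → ℤ) : Submodule ℚ (Fin m → ℚ) :=
  LinearMap.ker (Fintype.linearCombination ℚ fun i => ZtoQ (v i))

lemma mem_relations {d : Fin m → ℚ} : d ∈ relations v ↔ ∑ i, d i • ZtoQ (v i) = 0 := by
  simp [relations, Fintype.linearCombination_apply]

lemma sub_mem_relations_iff {x y : Fin m → ℚ} :
    x - y ∈ relations v ↔ ∑ i, x i • ZtoQ (v i) = ∑ i, y i • ZtoQ (v i) := by
  simp [relations, Fintype.linearCombination_apply, sub_smul, sub_eq_zero]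

lemma isElemIntRelation_iff {a : Fin m → ℚ} :
    IsElemIntRelation v a ↔ IsElementary (relations v) a ∧
      ∃ c : Fin m → ℤ, (∀ i, (c i : ℚ) = a i) ∧ Finset.univ.gcd c = 1 := by
  simp only [IsElemIntRelation, IsElementary, mem_relations, and_assoc]
  rfl

lemma ZtoQ_sum_smul (y : Fin m → ℤ) :
    ZtoQ (∑ i, y i • v i) = ∑ i, (y i : ℚ) • ZtoQ (v i) := by
  ext j
  simp [ZtoQ, Finset.sum_apply]

lemma ZtoQ_injective : Injective (ZtoQ (n := n)) :=
  fun _ _ h => funext fun j => Int.cast_injective (congrFun h j)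

lemma FarkasRelated.eq_neg_one_or_eq_zero_or_eq_one (hF : FarkasRelated v) {a : Fin m → ℚ}
    (ha : IsElemIntRelation v a) (i : Fin m) : a i = -1 ∨ a i = 0 ∨ a i = 1 := by
  obtain ⟨he, c, hca, hgcd⟩ := isElemIntRelation_iff.mp ha
  rcases eq_or_ne (a i) 0 with h0 | h0
  · exact Or.inr (Or.inl h0)
  -- round the rescaled relation `x` with `x i = 1` to an integral relation `y`
  set x := (a i)⁻¹ • a
  have hxV : x ∈ relations v := (relations v).smul_mem _ he.1
  obtain ⟨y, hyx, hy0⟩ := hF (fun k => ⌊x k⌋) (fun k => ⌈x k⌉) (fun k => Int.floor_le_ceil _) 0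
    (zero_mem _) ⟨x, fun k => ⟨Int.floor_le _, Int.le_ceil _⟩, by
      rw [mem_relations.mp hxV]; ext; simp [ZtoQ]⟩
  set y' : Fin m → ℚ := fun k => y k
  have hyV : y' ∈ relations v := by
    rw [mem_relations, ← ZtoQ_sum_smul, ← hy0]; ext; simp [ZtoQ]
  have hyx0 : ∀ k, x k = 0 → y k = 0 := fun k hk => by
    have := hyx k
    simp only [hk, Int.floor_zero, Int.ceil_zero] at this
    omega
  have hyi : y i = 1 := by
    have := hyx i
    simp only [x, Pi.smul_apply, smul_eq_mul, inv_mul_cancel₀ h0, Int.floor_one,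
      Int.ceil_one] at this
    omega
  have hsupp : support y' ⊆ support a := fun k hk hak =>
    hk (by simp [y', hyx0 k (by simp [x, hak])])
  have hya := he.eq_smul_of_support_subset hyV hsupp h0
  have hci : (c i : ℚ) ≠ 0 := hca i ▸ h0
  have hdvd : c i ∣ Finset.univ.gcd c := Finset.dvd_gcd fun k _ => ⟨y k, by
    have hyk := congrFun hya k
    simp only [y', hyi, ← hca, Pi.smul_apply, smul_eq_mul, Int.cast_one, one_div] at hyk
    exact_mod_cast (by rw [hyk, mul_inv_cancel_left₀ hci] : (c i : ℚ) * y k = c k).symm⟩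
  rw [hgcd] at hdvd
  rcases Int.isUnit_iff.mp (isUnit_of_dvd_one hdvd) with h | h <;> simp [← hca, h]

lemma exists_sign_relation_support_subset
    (H : ∀ a, IsElemIntRelation v a → ∀ i, a i = -1 ∨ a i = 0 ∨ a i = 1) :
    ∀ d ∈ relations v, d ≠ 0 → ∃ e ∈ relations v, e ≠ 0 ∧ support e ⊆ support d ∧
      ∀ i, e i = -1 ∨ e i = 0 ∨ e i = 1 := by
  intro d hd hd0
  obtain ⟨e, he, hed⟩ := exists_isElementary_support_subset hd hd0
  obtain ⟨r, hr, c, hc, hgcd⟩ := exists_smul_eq_intCast_gcd_eq_one he.2.1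
  obtain ⟨hreV, hre0, -⟩ := he.smul hr
  refine ⟨r • e, hreV, hre0, (support_const_smul_of_ne_zero r e hr).trans_subset hed,
    H _ (isElemIntRelation_iff.mpr ⟨he.smul hr, c, hc, hgcd⟩)⟩

lemma FarkasRelated.of_forall_isElemIntRelation
    (H : ∀ a, IsElemIntRelation v a → ∀ i, a i = -1 ∨ a i = 0 ∨ a i = 1) : FarkasRelated v := by
  rintro a b - w hw ⟨x, hxab, hxw⟩
  obtain ⟨z, rfl⟩ := (Submodule.mem_span_range_iff_exists_fun ℤ).mp hw
  obtain ⟨x', hx', hx'x, hslack⟩ := exists_mem_Icc_sub_mem_forall_support_subset_slackIndices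
    (relations v) (a := fun i => (a i : ℚ)) (b := fun i => (b i : ℚ)) (x := x)
    ⟨fun i => (hxab i).1, fun i => (hxab i).2⟩
  have hx'w : ∑ i, x' i • ZtoQ (v i) = ZtoQ (∑ i, z i • v i) :=
    (sub_mem_relations_iff.mp hx'x).trans hxw.symm
  have hbound : ∀ i ∉ slackIndices (fun i => (a i : ℚ)) (fun i => (b i : ℚ)) x',
      x' i ∈ (⊥ : Subring ℚ) := fun i hi => by
    rcases (hx'.1 i).eq_or_lt with h | h
    · exact Subring.mem_bot.mpr ⟨a i, h⟩
    · exact Subring.mem_bot.mpr ⟨b i, ((hx'.2 i).antisymm (not_lt.mp fun h' => hi ⟨h, h'⟩)).symm⟩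
  have hzZ : ∀ i, (z i : ℚ) ∈ (⊥ : Subring ℚ) := fun i => Subring.mem_bot.mpr ⟨z i, rfl⟩
  have hint := forall_mem_bot_of_forall_notMem (exists_sign_relation_support_subset H) hslack
    (sub_mem_relations_iff.mpr (hx'w.trans (ZtoQ_sum_smul z)))
    fun i hi => sub_mem (hbound i hi) (hzZ i)
  choose y hy using fun i => Subring.mem_bot.mp (by simpa using add_mem (hint i) (hzZ i))
  refine ⟨y, fun i => ⟨?_, ?_⟩, ZtoQ_injective ?_⟩
  · simpa [← hy i] using hx'.1 i
  · simpa [← hy i] using hx'.2 i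
  · rw [← hx'w, ZtoQ_sum_smul]
    simp only [hy]

end Farkas

/-- **Proposition 3.5**: `v₁,…,vₘ` are Farkas-related iff every elementary integral
relation `∑ aᵢ vᵢ = 0` has all coefficients in `{-1, 0, 1}`. -/
theorem farkasRelated_iff_elementary {n m : ℕ} (v : Fin m → Fin n → ℤ) :
    FarkasRelated v ↔
      ∀ a : Fin m → ℚ, IsElemIntRelation v a →
        ∀ i, a i = -1 ∨ a i = 0 ∨ a i = 1 :=
  ⟨fun hF _ => hF.eq_neg_one_or_eq_zero_or_eq_one, FarkasRelated.of_forall_isElemIntRelation⟩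
end
end
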